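/- arXiv:1309.3546 — 8 statements merged into one kernel-verified Lean document; each statement's English description precedes it below -/
import Mathlib

section
/- Let C be a linear MDS code of length n and dimension k over F_q with generator matrix G (whose rows form a basis of C), and covering radius ρ = n-k. A word u ∈ F_q^n is a deep hole of C (i.e., d(u,C) = n-k) if and only if the (k+1)×n matrix G' obtained by appending u as a new row to G generates a linear MDS code of dimension k+1. -/
open Matrix

/-- Error distance of a word `u` to a code `C`: the minimum Hamming distance to a codeword. -/
noncomputable def errDist {ι F : Type*} [Fintype ι] [DecidableEq F]
    (u : ι → F) (C : Set (ι → F)) : ℕ :=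
  sInf ((fun c => hammingDist u c) '' C)

/-- Minimum distance of a code `C`. -/
noncomputable def minDist {ι F : Type*} [Fintype ι] [DecidableEq F]
    (C : Set (ι → F)) : ℕ :=
  sInf {d | ∃ c₁ ∈ C, ∃ c₂ ∈ C, c₁ ≠ c₂ ∧ hammingDist c₁ c₂ = d}

/-! A nonzero codeword of `C` has weight `> n - k`, so it cannot vanish on the first `k`
coordinates: restriction to them is injective on `C`, hence bijective, and every word agrees
with some codeword there. So `d(u, C) ≤ n - k`.

For `u ∉ C`, a nonzero word `t • u + c` of `C' = F u + C` has weight `≥ minDist C` if `t = 0`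
and weight `d(u, -t⁻¹ c) ≥ d(u, C)` otherwise, while `u - c` for a nearest codeword `c` has
weight `d(u, C)`. Hence `min (minDist C) (d(u, C)) ≤ minDist C' ≤ d(u, C)`, which together with
`minDist C = n - k + 1` and `d(u, C) ≤ n - k` gives both directions. -/

open Function Set Submodule

section Distances

variable {ι F : Type*} [Fintype ι] [DecidableEq F] {C C' : Set (ι → F)}
  {u c : ι → F}

lemma errDist_le_hammingDist (hc : c ∈ C) : errDist u C ≤ hammingDist u c :=
  Nat.sInf_le ⟨c, hc, rfl⟩

lemma errDist_eq_zero_of_mem (hu : u ∈ C) : errDist u C = 0 :=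
  Nat.eq_zero_of_le_zero <| (errDist_le_hammingDist hu).trans_eq (hammingDist_self u)

lemma exists_hammingDist_eq_errDist (hC : C.Nonempty) :
    ∃ c ∈ C, hammingDist u c = errDist u C :=
  Nat.sInf_mem (hC.image _)

lemma minDist_le_hammingDist {c₁ c₂ : ι → F} (h₁ : c₁ ∈ C) (h₂ : c₂ ∈ C)
    (hne : c₁ ≠ c₂) :
    minDist C ≤ hammingDist c₁ c₂ :=
  Nat.sInf_le ⟨c₁, h₁, c₂, h₂, hne, rfl⟩

lemma minDist_le_errDist (hC : C.Nonempty) (hCC' : C ⊆ C') (hu : u ∈ C') (huC : u ∉ C) :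
    minDist C' ≤ errDist u C := by
  obtain ⟨c, hc, hdist⟩ := exists_hammingDist_eq_errDist (u := u) hC
  exact hdist ▸ minDist_le_hammingDist hu (hCC' hc) fun h => huC (h ▸ hc)

end Distances

section LinearCodes

variable {ι F : Type*} [Fintype ι] [Field F] [DecidableEq F] {V : Submodule F (ι → F)}
  {u c : ι → F}

lemma minDist_le_hammingNorm (hc : c ∈ V) (hc0 : c ≠ 0) :
    minDist (V : Set (ι → F)) ≤ hammingNorm c :=
  hammingDist_zero_right c ▸ minDist_le_hammingDist hc V.zero_mem hc0

lemma le_minDist_of_le_hammingNorm {d : ℕ} (hu : u ∈ V) (hu0 : u ≠ 0)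
    (h : ∀ c ∈ V, c ≠ 0 → d ≤ hammingNorm c) : d ≤ minDist (V : Set (ι → F)) := by
  refine le_csInf ⟨_, u, hu, 0, V.zero_mem, hu0, rfl⟩ ?_
  rintro _ ⟨c₁, h₁, c₂, h₂, hne, rfl⟩
  rw [hammingDist_eq_hammingNorm]
  exact h _ (V.add_mem (V.neg_mem h₁) h₂) (neg_add_eq_zero.not.mpr hne)

lemma min_minDist_errDist_le_minDist_sup (hu : u ∉ V) :
    min (minDist (V : Set (ι → F))) (errDist u V) ≤
      minDist ((F ∙ u ⊔ V : Submodule F (ι → F)) : Set (ι → F)) := by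
  have hu0 : u ≠ 0 := fun h => hu (h ▸ V.zero_mem)
  refine le_minDist_of_le_hammingNorm (mem_sup_left (mem_span_singleton_self u)) hu0 ?_
  intro _ hc hc0
  obtain ⟨_, hy, z, hz, rfl⟩ := mem_sup.mp hc
  obtain ⟨t, rfl⟩ := mem_span_singleton.mp hy
  by_cases ht : t = 0
  · subst ht
    rw [zero_smul, zero_add] at hc0 ⊢
    exact min_le_left _ _ |>.trans (minDist_le_hammingNorm hz hc0)
  · refine min_le_right _ _ |>.trans ?_
    calc errDist u V ≤ hammingDist u (-(t⁻¹ • z)) :=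
          errDist_le_hammingDist (V.neg_mem (V.smul_mem _ hz))
      _ = hammingNorm (t⁻¹ • (t • u + z)) := by
          rw [hammingDist_comm, hammingDist_eq_hammingNorm, neg_neg, smul_add, smul_smul,
            inv_mul_cancel₀ ht, one_smul, add_comm]
      _ = hammingNorm (t • u + z) :=
          hammingNorm_smul (fun _ => IsSMulRegular.of_ne_zero (inv_ne_zero ht)) _

end LinearCodes

lemma vecMul_mem_span_rows {m n F : Type*} [Fintype m] [Field F] (M : Matrix m n F)
    (x : m → F) :
    x ᵥ* M ∈ span F (range M.row) :=
  range_vecMulLinear M ▸ LinearMap.mem_range_self M.vecMulLinear x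

lemma setOf_exists_eq_vecMul {m n F : Type*} [Fintype m] [Field F] (M : Matrix m n F) :
    {v | ∃ x, v = x ᵥ* M} = (span F (range M.row) : Set (n → F)) := by
  rw [← range_vecMulLinear]
  ext v
  simp [eq_comm]

lemma linearIndependent_snoc_rows_iff {m : ℕ} {n F : Type*} [Field F] {G : Matrix (Fin m) n F}
    (hG : LinearIndependent F G.row) (u : n → F) :
    LinearIndependent F (fun i => Fin.snoc G u i) ↔ u ∉ span F (range G.row) :=
  linearIndependent_finSnoc.trans (and_iff_right hG)

lemma span_rows_snoc {m : ℕ} {n F : Type*} [Field F] (G : Matrix (Fin m) n F) (u : n → F) :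
    span F (range (of (Fin.snoc G u)).row) = F ∙ u ⊔ span F (range G.row) :=
  (congrArg (span F) (Fin.range_snoc G u)).trans (span_insert u _)

section Covering

variable {ι κ F : Type*} [Fintype ι] [Fintype κ]

lemma hammingNorm_le_card_sub_card [Zero F] [DecidableEq F] {e : κ → ι} (he : Injective e)
    {v : ι → F} (hv : v ∘ e = 0) : hammingNorm v ≤ Fintype.card ι - Fintype.card κ := by
  classical
  have hsub : ({i | v i ≠ 0} : Finset ι) ⊆ (Finset.univ.map ⟨e, he⟩)ᶜ := by
    intro i hi
    simp only [Finset.mem_filter, Finset.mem_univ, true_and] at hi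
    simp only [Finset.mem_compl, Finset.mem_map, Finset.mem_univ, true_and,
      Embedding.coeFn_mk, not_exists]
    rintro j rfl
    exact hi (congrFun hv j)
  calc hammingNorm v ≤ _ := Finset.card_le_card hsub
    _ = _ := by rw [Finset.card_compl, Finset.card_map, Finset.card_univ]

lemma errDist_span_rows_le [Field F] [DecidableEq F] (G : Matrix κ ι F) {e : κ → ι}
    (he : Injective e)
    (hG : ∀ x, x ≠ 0 → Fintype.card ι - Fintype.card κ < hammingNorm (x ᵥ* G))
    (u : ι → F) :
    errDist u (span F (range G.row) : Set (ι → F)) ≤ Fintype.card ι - Fintype.card κ := by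
  let φ : (κ → F) →ₗ[F] κ → F := (LinearMap.funLeft F F e).comp G.vecMulLinear
  have hφ : Injective φ := by
    refine injective_iff_map_eq_zero φ |>.mpr fun x hx => ?_
    by_contra hx0
    exact (hG x hx0).not_ge (hammingNorm_le_card_sub_card he hx)
  obtain ⟨x, hx⟩ := LinearMap.injective_iff_surjective.mp hφ (u ∘ e)
  refine errDist_le_hammingDist (vecMul_mem_span_rows G x) |>.trans ?_
  rw [hammingDist_comm, hammingDist_eq_hammingNorm]
  exact hammingNorm_le_card_sub_card he (funext fun i => neg_add_eq_zero.mpr (congrFun hx i))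

end Covering

theorem stmt0_general {F : Type*} [Field F] [DecidableEq F]
    {n k : ℕ} (hkn : k < n)
    (G : Matrix (Fin k) (Fin n) F)
    (hG : LinearIndependent F (fun i => G i))
    (C : Set (Fin n → F))
    (hC : C = {v | ∃ x : Fin k → F, v = x ᵥ* G})
    (hMDS : minDist C = n - k + 1)
    (u : Fin n → F) :
    errDist u C = n - k ↔
      (LinearIndependent F (fun i : Fin (k + 1) => Fin.snoc G u i) ∧
        minDist {v | ∃ x : Fin (k + 1) → F, v = x ᵥ* Matrix.of (Fin.snoc G u)} =
          n - (k + 1) + 1) := by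
  rw [setOf_exists_eq_vecMul] at hC ⊢
  subst hC
  rw [linearIndependent_snoc_rows_iff hG, span_rows_snoc, show n - (k + 1) + 1 = n - k by omega]
  set V := span F (range G.row)
  have hwt : ∀ x, x ≠ 0 → n - k < hammingNorm (x ᵥ* G) := fun x hx => by
    have hxG : x ᵥ* G ≠ 0 := fun h =>
      hx (vecMul_injective_iff.mpr hG (h.trans (zero_vecMul G).symm))
    exact Nat.lt_iff_add_one_le.mpr (hMDS ▸ minDist_le_hammingNorm (vecMul_mem_span_rows G x) hxG)
  have hcov : errDist u V ≤ n - k := by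
    simpa using errDist_span_rows_le G (Fin.castLE_injective hkn.le) (by simpa using hwt) u
  have hle := minDist_le_errDist (u := u) ⟨0, V.zero_mem⟩
    (SetLike.coe_subset_coe.mpr le_sup_right) (mem_sup_left (mem_span_singleton_self u))
  constructor
  · intro hE
    have hu : u ∉ V := fun hu => by rw [errDist_eq_zero_of_mem hu] at hE; omega
    refine ⟨hu, le_antisymm (hE ▸ hle hu) ?_⟩
    simpa [hMDS, hE] using min_minDist_errDist_le_minDist_sup hu
  · rintro ⟨hu, hmin⟩
    exact le_antisymm hcov (hmin ▸ hle hu)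

theorem stmt0 {F : Type*} [Field F] [Fintype F] [DecidableEq F]
    {n k : ℕ} (hkn : k < n)
    (G : Matrix (Fin k) (Fin n) F)
    (hG : LinearIndependent F (fun i => G i))
    (C : Set (Fin n → F))
    (hC : C = {v | ∃ x : Fin k → F, v = x ᵥ* G})
    (hMDS : minDist C = n - k + 1)
    (u : Fin n → F) :
    errDist u C = n - k ↔
      (LinearIndependent F (fun i : Fin (k + 1) => Fin.snoc G u i) ∧
        minDist {v | ∃ x : Fin (k + 1) → F, v = x ᵥ* Matrix.of (Fin.snoc G u)} =
          n - (k + 1) + 1) :=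
  stmt0_general hkn G hG C hC hMDS u
end

section
/- Let F be a field, let β_1,...,β_k, δ be distinct elements of F, and let γ ∈ F. Consider the (k+1)×(k+1) matrix A whose first k rows are the Vandermonde rows (β_1^j,...,β_k^j, δ^j) for j = 0,...,k-1, and whose last row is (1/(β_1-δ), ..., 1/(β_k-δ), γ). Then det(A) = (∏_{1≤i<j≤k}(β_j - β_i)) · (γ + Σ_{i=1}^k 1/(δ - β_i)). In particular, A is singular if and only if γ = -Σ_{i=1}^k 1/(δ - β_i). -/
/-!
Subtract from the last row the combination `∑ₘ pₘ • (row m)` of the Vandermonde rows, where `p`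
is the polynomial of degree `< k` with `p(βᵢ) = (βᵢ - δ)⁻¹`. This clears the first `k` entries of
the last row. With `f = ∏ᵢ (X - βᵢ)` one has `p = (f(δ) - f) / (f(δ) (X - δ))`, hence
`p(δ) = -f'(δ) / f(δ) = -∑ᵢ (δ - βᵢ)⁻¹`, and the corner entry becomes `γ + ∑ᵢ (δ - βᵢ)⁻¹`.
Expanding along the last row leaves the Vandermonde determinant of `β`.
-/

open Finset Polynomial Matrix

namespace Polynomial

variable {R : Type*} [CommRing R]

theorem sub_mul_eval_divByMonic_X_sub_C (p : R[X]) (x y : R) :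
    (y - x) * (p /ₘ (X - C x)).eval y = p.eval y - p.eval x := by
  simpa [modByMonic_X_sub_C_eq_C_eval] using
    congrArg (eval y) (X_sub_C_mul_divByMonic_eq_sub_modByMonic p x)

theorem eval_divByMonic_X_sub_C_self (p : R[X]) (x : R) :
    (p /ₘ (X - C x)).eval x = (derivative p).eval x := by
  simpa using
    congrArg (eval x) (divByMonic_add_X_sub_C_mul_derivative_divByMonic_eq_derivative p x)

theorem sum_fin_coeff_mul_pow {p : R[X]} {n : ℕ} (hp : p.degree < n) (x : R) :
    ∑ i : Fin n, p.coeff i * x ^ (i : ℕ) = p.eval x := by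
  rw [eval_eq_sum]
  exact sum_fin (fun i a => a * x ^ i) (fun _ => zero_mul _) hp

end Polynomial

namespace Lagrange

variable {F ι : Type*} [Field F] {s : Finset ι} {v : ι → F} {x : F}

theorem eval_derivative_nodal_not_at_node (hx : ∀ i ∈ s, x ≠ v i) :
    (derivative (nodal s v)).eval x = (nodal s v).eval x * ∑ i ∈ s, (x - v i)⁻¹ := by
  classical
  rw [derivative_nodal, eval_finsetSum, mul_sum]
  refine sum_congr rfl fun i hi => ?_
  rw [eq_mul_inv_iff_mul_eq₀ (sub_ne_zero.mpr (hx i hi)), eval_nodal, eval_nodal,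
    prod_erase_mul _ _ hi]

theorem exists_degree_lt_eval_eq_inv_sub (hx : ∀ i ∈ s, x ≠ v i) :
    ∃ p : F[X], p.degree < #s ∧ (∀ i ∈ s, p.eval (v i) = (v i - x)⁻¹) ∧
      p.eval x = -∑ i ∈ s, (x - v i)⁻¹ := by
  have hN : (nodal s v).eval x ≠ 0 := eval_nodal_not_at_node hx
  refine ⟨C (-((nodal s v).eval x)⁻¹) * (nodal s v /ₘ (X - C x)), ?_, fun i hi => ?_, ?_⟩
  · rw [degree_C_mul (neg_ne_zero.mpr (inv_ne_zero hN)), ← degree_nodal (s := s) (v := v)]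
    exact degree_divByMonic_lt _ _ nodal_ne_zero (by rw [degree_X_sub_C]; exact zero_lt_one)
  · have h := sub_mul_eval_divByMonic_X_sub_C (nodal s v) x (v i)
    rw [eval_nodal_at_node hi] at h
    refine eq_inv_of_mul_eq_one_left ?_
    rw [eval_mul, eval_C, mul_assoc, mul_comm _ (v i - x), h, zero_sub, neg_mul_neg,
      inv_mul_cancel₀ hN]
  · rw [eval_mul, eval_C, eval_divByMonic_X_sub_C_self, eval_derivative_nodal_not_at_node hx]
    field_simp

end Lagrange

namespace Matrix

variable {R : Type*} [CommRing R] {k : ℕ}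

theorem det_updateRow_single (A : Matrix (Fin (k + 1)) (Fin (k + 1)) R) (i : Fin (k + 1))
    (t : R) :
    (A.updateRow i (Pi.single i t)).det = t * (A.submatrix i.succAbove i.succAbove).det := by
  have : Pi.single i t = t • Pi.single i (1 : R) := by
    rw [← Pi.single_smul', smul_eq_mul, mul_one]
  rw [this, det_updateRow_smul, ← adjugate_apply, adjugate_fin_succ_eq_det_submatrix,
    Even.neg_one_pow ⟨i, rfl⟩, one_mul]

theorem det_eq_mul_det_submatrix_castSucc_of_last_row_eq
    (A : Matrix (Fin (k + 1)) (Fin (k + 1)) R) (c : Fin k → R) (t : R)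
    (h : A (Fin.last k) = ∑ m, c m • A m.castSucc + Pi.single (Fin.last k) t) :
    A.det = t * (A.submatrix Fin.castSucc Fin.castSucc).det := by
  have hrow := det_updateRow_sum A (Fin.last k) (Fin.snoc (-c) 1)
  rw [Fin.sum_univ_castSucc] at hrow
  simp only [Fin.snoc_castSucc, Fin.snoc_last, one_smul, h, Pi.neg_apply, neg_smul,
    sum_neg_distrib] at hrow
  rw [neg_add_cancel_left, det_updateRow_single, Fin.succAbove_last] at hrow
  exact hrow.symm

end Matrix

theorem stmt7 {F : Type*} [Field F] (k : ℕ) (β : Fin k → F) (δ γ : F)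
    (hβ : Function.Injective β) (hβδ : ∀ i, β i ≠ δ)
    (A : Matrix (Fin (k + 1)) (Fin (k + 1)) F)
    (hA : A = Matrix.of fun i j : Fin (k + 1) =>
      if hj : (j : ℕ) < k then
        (if (i : ℕ) < k then β ⟨j, hj⟩ ^ (i : ℕ) else (β ⟨j, hj⟩ - δ)⁻¹)
      else
        (if (i : ℕ) < k then δ ^ (i : ℕ) else γ)) :
    A.det = (∏ i : Fin k, ∏ j ∈ Finset.Ioi i, (β j - β i)) *
        (γ + ∑ i : Fin k, (δ - β i)⁻¹) ∧
      (A.det = 0 ↔ γ = -∑ i : Fin k, (δ - β i)⁻¹) := by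
  obtain ⟨p, hp_deg, hp_β, hp_δ⟩ :=
    Lagrange.exists_degree_lt_eval_eq_inv_sub (s := univ) (v := β) (x := δ)
      fun i _ => (hβδ i).symm
  rw [card_univ, Fintype.card_fin] at hp_deg
  have hA_minor : A.submatrix Fin.castSucc Fin.castSucc = (vandermonde β)ᵀ := by
    ext i j
    simp [hA]
  have hA_last : A (Fin.last k) = ∑ m : Fin k, p.coeff m • A m.castSucc +
      Pi.single (Fin.last k) (γ + ∑ i : Fin k, (δ - β i)⁻¹) := by
    ext j
    refine Fin.lastCases ?_ (fun j => ?_) j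
    · simp [hA, sum_fin_coeff_mul_pow hp_deg, hp_δ]
    · simp [hA, sum_fin_coeff_mul_pow hp_deg, hp_β]
  have hdet : A.det = (∏ i : Fin k, ∏ j ∈ Finset.Ioi i, (β j - β i)) *
      (γ + ∑ i : Fin k, (δ - β i)⁻¹) := by
    rw [det_eq_mul_det_submatrix_castSucc_of_last_row_eq A _ _ hA_last, hA_minor, det_transpose,
      det_vandermonde, mul_comm]
  have hV : ∏ i : Fin k, ∏ j ∈ Finset.Ioi i, (β j - β i) ≠ 0 :=
    det_vandermonde β ▸ det_vandermonde_ne_zero_iff.mpr hβ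
  exact ⟨hdet, by rw [hdet, mul_eq_zero_iff_left hV, add_eq_zero_iff_eq_neg]⟩
end

section
/- Let F be a field, let β_1,...,β_k, δ, δ' be distinct elements of F, and let γ ∈ F. Consider the (k+1)×(k+1) matrix B whose first k rows are the Vandermonde rows (β_1^j,...,β_k^j, δ^j) for j = 0,...,k-1, and whose last row is (1/(β_1-δ'), ..., 1/(β_k-δ'), γ). Then (δ-δ')·det(B) / ∏_{1≤i<j≤k}(β_j-β_i) = ∏_{i=1}^k ((β_i-δ)/(β_i-δ')) + γ(δ-δ') - 1. In particular, B is singular if and only if ∏_{i=1}^k (1 + (δ'-δ)/(β_i-δ')) = 1 - γ(δ-δ'). -/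
/-!
Put `x = (β₁, …, β_k, δ)`, so that `B` is the transposed Vandermonde matrix of `x` with its
last row replaced by `w = ((β₁ - δ')⁻¹, …, (β_k - δ')⁻¹, γ)`. Since
`w_j = (x_j - δ')⁻¹ + (γ - (δ - δ')⁻¹) [j = k+1]` and the determinant is linear in that row,
`det B` is the determinant with last row `((x_j - δ')⁻¹)_j` plus `(γ - (δ - δ')⁻¹) V(β)`, the
second term being a cofactor. Multiplying column `j` of the first matrix by `x_j - δ'` makes its
rows the values at `x` of the monic polynomials `X^i (X - δ')`, `i < k`, and `1`; after a cyclic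
shift of the rows this is a Vandermonde determinant, so the first term is
`(-1)^k V(β) ∏ (δ - β_i) / ((δ - δ') ∏ (β_i - δ'))`.
-/

open Finset Matrix

namespace Matrix

variable {R : Type*} [CommRing R] {n : ℕ}

lemma det_vandermonde_snoc (v : Fin n → R) (a : R) :
    (vandermonde (Fin.snoc v a : Fin (n + 1) → R)).det = (vandermonde v).det * ∏ i, (a - v i) := by
  have prod_Ioi_castSucc (f : Fin (n + 1) → R) (i : Fin n) :
      ∏ j ∈ Ioi i.castSucc, f j = (∏ j ∈ Ioi i, f j.castSucc) * f (Fin.last n) := by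
    simp only [← filter_lt_eq_Ioi, prod_filter, Fin.prod_univ_castSucc,
      Fin.castSucc_lt_castSucc_iff, Fin.castSucc_lt_last, if_true]
  have Ioi_last : Ioi (Fin.last n) = ∅ := Ioi_eq_empty.mpr isMax_top
  simp only [det_vandermonde, Fin.prod_univ_castSucc, prod_Ioi_castSucc, Fin.snoc_castSucc,
    Fin.snoc_last, Ioi_last, prod_empty, mul_one, prod_mul_distrib]

lemma det_updateRow_last_single (A : Matrix (Fin (n + 1)) (Fin (n + 1)) R) :
    (A.updateRow (Fin.last n) (Pi.single (Fin.last n) 1)).det =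
      (A.submatrix Fin.castSucc Fin.castSucc).det := by
  rw [← adjugate_apply, adjugate_fin_succ_eq_det_submatrix, Fin.succAbove_last, ← two_mul,
    pow_mul, neg_one_sq, one_pow, one_mul]

open Polynomial in
lemma prod_sub_mul_det_updateRow_last_inv_sub {K : Type*} [Field K] (x : Fin (n + 1) → K)
    (c : K) (hx : ∀ j, x j ≠ c) :
    (∏ j, (x j - c)) * ((vandermonde x)ᵀ.updateRow (Fin.last n) fun j => (x j - c)⁻¹).det =
      (-1) ^ n * (vandermonde x).det := by
  set p : Fin (n + 1) → K[X] := Fin.cons 1 fun i => X ^ (i : ℕ) * (X - C c)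
  have hmonic : ∀ i, (p i).Monic :=
    Fin.cases monic_one fun i => (monic_X_pow _).mul (monic_X_sub_C c)
  have hdeg : ∀ i, (p i).natDegree = i := Fin.cases natDegree_one fun i => by
    simp [p, (monic_X_pow _).natDegree_mul (monic_X_sub_C c)]
  have hscaled : (of fun i j => (x j - c) *
      ((vandermonde x)ᵀ.updateRow (Fin.last n) fun j => (x j - c)⁻¹) i j) =
      (of fun i j => (p j).eval (x i))ᵀ.submatrix (finRotate _) id := by
    ext i j
    induction i using Fin.lastCases with
    | last => simp [p, mul_inv_cancel₀ (sub_ne_zero.mpr (hx j))]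
    | cast i => simp [p, vandermonde_apply, mul_comm]
  rw [← det_mul_row, hscaled, det_permute, det_transpose,
    ← det_eval_matrixOfPolynomials_eq_det_vandermonde x p hdeg hmonic, sign_finRotate]
  simp

variable {F : Type*} [Field F] {k : ℕ}

lemma sub_mul_det_updateRow_vandermonde_snoc (β : Fin k → F) {δ δ' : F} (γ : F)
    (hβδ' : ∀ i, β i ≠ δ') (hδδ' : δ ≠ δ') :
    (δ - δ') * ((vandermonde (Fin.snoc β δ))ᵀ.updateRow (Fin.last k)
        (Fin.snoc (fun i => (β i - δ')⁻¹) γ)).det =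
      (vandermonde β).det * ((∏ i, (β i - δ) / (β i - δ')) + γ * (δ - δ') - 1) := by
  set x : Fin (k + 1) → F := Fin.snoc β δ
  have hx : ∀ j, x j ≠ δ' :=
    Fin.lastCases (by simpa [x] using hδδ') fun i => by simpa [x] using hβδ' i
  have hrow : (Fin.snoc (fun i => (β i - δ')⁻¹) γ : Fin (k + 1) → F) =
      (fun j => (x j - δ')⁻¹) + (γ - (δ - δ')⁻¹) • Pi.single (Fin.last k) 1 := by
    ext j
    induction j using Fin.lastCases with
    | last => simp [x]
    | cast i => simp [x, (Fin.castSucc_lt_last i).ne]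
  have hsingle : ((vandermonde x)ᵀ.updateRow (Fin.last k) (Pi.single (Fin.last k) 1)).det =
      (vandermonde β).det := by
    rw [det_updateRow_last_single, ← det_transpose]
    congr 1
    ext i j
    simp [x, vandermonde_apply]
  have hinv := prod_sub_mul_det_updateRow_last_inv_sub x δ' hx
  have hprod_x : ∏ j, (x j - δ') = (∏ i, (β i - δ')) * (δ - δ') := by
    simp [x, Fin.prod_univ_castSucc]
  have hsign : ∏ i, (β i - δ) = (-1) ^ k * ∏ i, (δ - β i) := by
    simp_rw [← neg_sub δ, prod_neg, card_univ, Fintype.card_fin]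
  rw [hprod_x, det_vandermonde_snoc] at hinv
  rw [hrow, det_updateRow_add, det_updateRow_smul, hsingle, prod_div_distrib]
  generalize ((vandermonde x)ᵀ.updateRow (Fin.last k) fun j => (x j - δ')⁻¹).det = D at hinv ⊢
  have hprod : ∏ i, (β i - δ') ≠ 0 := prod_ne_zero_iff.mpr fun i _ => sub_ne_zero.mpr (hβδ' i)
  have hsub : δ - δ' ≠ 0 := sub_ne_zero.mpr hδδ'
  field_simp
  linear_combination hinv - (vandermonde β).det * hsign

end Matrix

theorem stmt8_general {F : Type*} [Field F] (k : ℕ) (β : Fin k → F) (δ δ' γ : F)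
    (hβ : Function.Injective β) (hβδ' : ∀ i, β i ≠ δ')
    (hδδ' : δ ≠ δ')
    (B : Matrix (Fin (k + 1)) (Fin (k + 1)) F)
    (hB : B = Matrix.of fun i j : Fin (k + 1) =>
      if hj : (j : ℕ) < k then
        (if (i : ℕ) < k then β ⟨j, hj⟩ ^ (i : ℕ) else (β ⟨j, hj⟩ - δ')⁻¹)
      else
        (if (i : ℕ) < k then δ ^ (i : ℕ) else γ)) :
    (δ - δ') * B.det / (∏ i : Fin k, ∏ j ∈ Finset.Ioi i, (β j - β i)) =
        (∏ i : Fin k, (β i - δ) / (β i - δ')) + γ * (δ - δ') - 1 ∧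
      (B.det = 0 ↔
        (∏ i : Fin k, (1 + (δ' - δ) / (β i - δ'))) = 1 - γ * (δ - δ')) := by
  have hB' : B = (vandermonde (Fin.snoc β δ))ᵀ.updateRow (Fin.last k)
      (Fin.snoc (fun i => (β i - δ')⁻¹) γ) := by
    subst hB
    ext i j
    induction i using Fin.lastCases <;> induction j using Fin.lastCases <;>
      simp [vandermonde_apply, updateRow_ne]
  have hV : (vandermonde β).det ≠ 0 := det_vandermonde_ne_zero_iff.mpr hβ
  have hdet : (δ - δ') * B.det / (vandermonde β).det =
      (∏ i, (β i - δ) / (β i - δ')) + γ * (δ - δ') - 1 := by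
    rw [hB', sub_mul_det_updateRow_vandermonde_snoc β γ hβδ' hδδ', mul_div_cancel_left₀ _ hV]
  have hfactor (i : Fin k) : 1 + (δ' - δ) / (β i - δ') = (β i - δ) / (β i - δ') := by
    field_simp [sub_ne_zero.mpr (hβδ' i)]
    ring
  rw [← det_vandermonde]
  refine ⟨hdet, ?_⟩
  simp_rw [hfactor]
  calc B.det = 0 ↔ (δ - δ') * B.det / (vandermonde β).det = 0 := by
        simp [hV, sub_ne_zero.mpr hδδ']
    _ ↔ _ := by rw [hdet, sub_eq_zero, eq_sub_iff_add_eq]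

theorem stmt8 {F : Type*} [Field F] (k : ℕ) (β : Fin k → F) (δ δ' γ : F)
    (hβ : Function.Injective β) (hβδ : ∀ i, β i ≠ δ) (hβδ' : ∀ i, β i ≠ δ')
    (hδδ' : δ ≠ δ')
    (B : Matrix (Fin (k + 1)) (Fin (k + 1)) F)
    (hB : B = Matrix.of fun i j : Fin (k + 1) =>
      if hj : (j : ℕ) < k then
        (if (i : ℕ) < k then β ⟨j, hj⟩ ^ (i : ℕ) else (β ⟨j, hj⟩ - δ')⁻¹)
      else
        (if (i : ℕ) < k then δ ^ (i : ℕ) else γ)) :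
    (δ - δ') * B.det / (∏ i : Fin k, ∏ j ∈ Finset.Ioi i, (β j - β i)) =
        (∏ i : Fin k, (β i - δ) / (β i - δ')) + γ * (δ - δ') - 1 ∧
      (B.det = 0 ↔
        (∏ i : Fin k, (1 + (δ' - δ) / (β i - δ'))) = 1 - γ * (δ - δ')) :=
  stmt8_general k β δ δ' γ hβ hβδ' hδδ' B hB
end

section
/- Let p be an odd prime, k ≥ (p-1)/2, d ≥ 2, and D = {α_1,...,α_{k+d}} ⊆ F_p a set of k+d distinct elements, with δ ∈ F_p \ D. Then for every γ ∈ F_p there exists a k-element subset {β_1,...,β_k} ⊆ D such that Σ_{i=1}^k 1/(δ - β_i) + γ = 0. -/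
/-!
The map `β ↦ (δ - β)⁻¹` is injective, so it is enough to pick any `k + 2` elements of `D` and
delete two of them, `a ≠ b`, whose images sum to the total of the images plus `γ`. Such a pair
exists because the image set `S` has `k + 2 ≥ (p + 3) / 2` elements: `S` and `t - S` then meet in
at least two points, and since `2` is invertible at most one of them satisfies `x = t - x`.
-/

open Finset

section PairSums

variable {G : Type*} [AddCommGroup G] [Fintype G] [DecidableEq G]

theorem exists_ne_add_eq_of_card_le (hdouble : Function.Injective fun x : G => x + x)
    (S : Finset G) (hS : Fintype.card G + 2 ≤ 2 * #S) (t : G) :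
    ∃ x ∈ S, ∃ y ∈ S, x ≠ y ∧ x + y = t := by
  have hR : 1 < #(S ∩ S.image (t - ·)) := by
    have : #(S.image (t - ·)) = #S := card_image_of_injective _ sub_right_injective
    have := card_inter_add_card_union S (S.image (t - ·))
    have := card_le_univ (S ∪ S.image (t - ·))
    omega
  obtain ⟨x, hxR, hx⟩ : ∃ x ∈ S ∩ S.image (t - ·), x + x ≠ t := by
    obtain ⟨x, hx, y, hy, hxy⟩ := one_lt_card.mp hR
    by_contra! h
    exact hxy (hdouble ((h x hx).trans (h y hy).symm))
  obtain ⟨hxS, y, hyS, rfl⟩ := by simpa only [mem_inter, mem_image] using hxR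
  exact ⟨t - y, hxS, y, hyS, fun h => hx ((congrArg (t - y + ·) h).trans (sub_add_cancel t y)),
    sub_add_cancel t y⟩

theorem exists_subset_card_add_two_sum_eq {α : Type*} [DecidableEq α]
    (hdouble : Function.Injective fun x : G => x + x) {f : α → G} {E : Finset α}
    (hf : Set.InjOn f E) (hE : Fintype.card G + 2 ≤ 2 * #E) (s : G) :
    ∃ T ⊆ E, #T + 2 = #E ∧ ∑ β ∈ T, f β = s := by
  obtain ⟨_, hx, _, hy, hxy, hsum⟩ := exists_ne_add_eq_of_card_le hdouble (E.image f)
    (by rwa [card_image_of_injOn hf]) (∑ β ∈ E, f β - s)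
  obtain ⟨a, ha, rfl⟩ := mem_image.mp hx
  obtain ⟨b, hb, rfl⟩ := mem_image.mp hy
  have hab : a ≠ b := fun h => hxy (congrArg f h)
  have hpair : {a, b} ⊆ E := insert_subset ha (singleton_subset_iff.mpr hb)
  refine ⟨E \ {a, b}, sdiff_subset, ?_, ?_⟩
  · simpa only [card_pair hab] using card_sdiff_add_card_eq_card hpair
  · rw [sum_sdiff_eq_sub hpair, sum_pair hab, hsum, sub_sub_cancel]

theorem exists_subset_card_sum_eq {α : Type*} [DecidableEq α]
    (hdouble : Function.Injective fun x : G => x + x) {f : α → G} (hf : Function.Injective f)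
    {k : ℕ} (hk : Fintype.card G ≤ 2 * k + 2) {D : Finset α} (hD : k + 2 ≤ #D) (s : G) :
    ∃ T ⊆ D, #T = k ∧ ∑ β ∈ T, f β = s := by
  obtain ⟨E, hED, hE⟩ := exists_subset_card_eq hD
  obtain ⟨T, hTE, hT, hsum⟩ :=
    exists_subset_card_add_two_sum_eq hdouble hf.injOn (by omega : _ ≤ 2 * #E) s
  exact ⟨T, hTE.trans hED, by omega, hsum⟩

end PairSums

theorem stmt10_general (p : ℕ) [Fact p.Prime] (hodd : Odd p) (k d : ℕ)
    (hk : (p - 1) / 2 ≤ k) (hd : 2 ≤ d)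
    (D : Finset (ZMod p)) (hD : D.card = k + d)
    (δ : ZMod p) (γ : ZMod p) :
    ∃ T ⊆ D, T.card = k ∧ (∑ β ∈ T, (δ - β)⁻¹) + γ = 0 := by
  have hp : Fintype.card (ZMod p) ≤ 2 * k + 2 := by
    obtain ⟨m, rfl⟩ := hodd
    rw [ZMod.card]
    omega
  have htwo : (2 : ZMod p) ≠ 0 := Ring.two_ne_zero <| by
    rw [ZMod.ringChar_zmod_n]
    exact hodd.ne_two_of_dvd_nat (dvd_refl p)
  have hdouble : Function.Injective fun x : ZMod p => x + x := fun x y h => by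
    simpa only [← two_mul, mul_right_inj' htwo] using h
  obtain ⟨T, hTD, hT, hsum⟩ := exists_subset_card_sum_eq hdouble
    (inv_injective.comp (sub_right_injective (b := δ))) hp (by omega : k + 2 ≤ #D) (-γ)
  exact ⟨T, hTD, hT, eq_neg_iff_add_eq_zero.mp hsum⟩

theorem stmt10 (p : ℕ) [Fact p.Prime] (hodd : Odd p) (k d : ℕ)
    (hk : (p - 1) / 2 ≤ k) (hd : 2 ≤ d)
    (D : Finset (ZMod p)) (hD : D.card = k + d)
    (δ : ZMod p) (hδ : δ ∉ D) (γ : ZMod p) :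
    ∃ T ⊆ D, T.card = k ∧ (∑ β ∈ T, (δ - β)⁻¹) + γ = 0 :=
  stmt10_general p hodd k d hk hd D hD δ γ
end

section
/- Let p be an odd prime, k ≥ (p-1)/2, and D ⊆ F_p with |D| ≥ k+2. Let δ ∉ D and δ' ∉ D ∪ {δ}. Then for every γ ∈ F_p with γ ≠ 1/(δ-δ'), there exists a k-element subset {β_1,...,β_k} ⊆ D such that ∏_{i=1}^k (1 + (δ'-δ)/(β_i-δ')) = 1 - γ(δ-δ'). -/
open Finset

theorem stmt11 (p : ℕ) [Fact p.Prime] (hodd : Odd p) (k : ℕ)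
    (hk : (p - 1) / 2 ≤ k)
    (D : Finset (ZMod p)) (hD : k + 2 ≤ D.card)
    (δ δ' : ZMod p) (hδ : δ ∉ D) (hδ' : δ' ∉ D) (hne : δ' ≠ δ)
    (γ : ZMod p) (hγ : γ ≠ (δ - δ')⁻¹) :
    ∃ T ⊆ D, T.card = k ∧
      (∏ β ∈ T, (1 + (δ' - δ) / (β - δ'))) = 1 - γ * (δ - δ') := by
  have hp := (Fact.out : p.Prime)
  set g : ZMod p → ZMod p := fun β => (β - δ) / (β - δ') with hgdef
  have hδδ' : δ - δ' ≠ 0 := sub_ne_zero.mpr hne.symm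
  set c : ZMod p := 1 - γ * (δ - δ') with hc
  have hc0 : c ≠ 0 := by
    intro h
    apply hγ
    rw [hc] at h
    have h1 : γ * (δ - δ') = 1 := by linear_combination -h
    exact eq_inv_of_mul_eq_one_left h1
  -- basic facts about g on D
  have hsub1 : ∀ β ∈ D, β - δ ≠ 0 := fun β hβ =>
    sub_ne_zero.mpr (fun h => hδ (h ▸ hβ))
  have hsub2 : ∀ β ∈ D, β - δ' ≠ 0 := fun β hβ =>
    sub_ne_zero.mpr (fun h => hδ' (h ▸ hβ))
  have hg0 : ∀ β ∈ D, g β ≠ 0 := fun β hβ =>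
    div_ne_zero (hsub1 β hβ) (hsub2 β hβ)
  obtain ⟨D₀, hD₀D, hD₀card⟩ := Finset.exists_subset_card_eq hD
  have hginj : Set.InjOn g D₀ := by
    intro a ha b hb h
    have ha' : a - δ' ≠ 0 := hsub2 a (hD₀D ha)
    have hb' : b - δ' ≠ 0 := hsub2 b (hD₀D hb)
    rw [hgdef, div_eq_div_iff ha' hb'] at h
    have h2 : (δ - δ') * (a - b) = 0 := by linear_combination h
    rcases mul_eq_zero.mp h2 with h3 | h3
    · exact absurd h3 hδδ'
    · exact sub_eq_zero.mp h3
  set P : ZMod p := ∏ β ∈ D₀, g β with hP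
  have hP0 : P ≠ 0 := Finset.prod_ne_zero_iff.mpr (fun β hβ => hg0 β (hD₀D hβ))
  set d : ZMod p := P / c with hd
  have hd0 : d ≠ 0 := div_ne_zero hP0 hc0
  set A : Finset (ZMod p) := D₀.image g with hA
  set B : Finset (ZMod p) := D₀.image (fun β => d / g β) with hB
  have hAcard : A.card = k + 2 := by
    rw [hA, Finset.card_image_of_injOn hginj, hD₀card]
  have hBcard : B.card = k + 2 := by
    rw [hB, Finset.card_image_of_injOn, hD₀card]
    intro a ha b hb h
    simp only at h
    have ha0 : g a ≠ 0 := hg0 a (hD₀D ha)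
    have hb0 : g b ≠ 0 := hg0 b (hD₀D hb)
    rw [div_eq_div_iff ha0 hb0] at h
    exact (hginj hb ha (mul_left_cancel₀ hd0 h)).symm
  have hABsub : A ∪ B ⊆ Finset.univ.erase (0 : ZMod p) := by
    intro x hx
    rw [Finset.mem_erase]
    refine ⟨?_, Finset.mem_univ x⟩
    rcases Finset.mem_union.mp hx with h | h
    · obtain ⟨β, hβ, rfl⟩ := Finset.mem_image.mp h
      exact hg0 β (hD₀D hβ)
    · obtain ⟨β, hβ, rfl⟩ := Finset.mem_image.mp h
      exact div_ne_zero hd0 (hg0 β (hD₀D hβ))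
  have hpcard : Fintype.card (ZMod p) = p := ZMod.card p
  have hUcard : (A ∪ B).card ≤ p - 1 := by
    calc (A ∪ B).card ≤ (Finset.univ.erase (0 : ZMod p)).card :=
          Finset.card_le_card hABsub
      _ = p - 1 := by
          rw [Finset.card_erase_of_mem (Finset.mem_univ _), Finset.card_univ, hpcard]
  have hinter : 3 ≤ (A ∩ B).card := by
    have hkey := Finset.card_union_add_card_inter A B
    obtain ⟨m, hm⟩ := hodd
    omega
  have hx : ∃ x ∈ A ∩ B, x * x ≠ d := by
    by_contra h
    push_neg at h
    obtain ⟨x₀, hx₀⟩ := Finset.card_pos.mp (by omega : 0 < (A ∩ B).card)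
    have hsub3 : A ∩ B ⊆ {x₀, -x₀} := by
      intro x hxmem
      have h1 := h x hxmem
      have h2 := h x₀ hx₀
      have h3 : (x - x₀) * (x + x₀) = 0 := by linear_combination h1 - h2
      rcases mul_eq_zero.mp h3 with h4 | h4
      · simp [sub_eq_zero.mp h4]
      · simp [eq_neg_of_add_eq_zero_left h4]
    have h5 := Finset.card_le_card hsub3
    have h6 : ({x₀, -x₀} : Finset (ZMod p)).card ≤ 2 := by
      apply le_trans (Finset.card_insert_le _ _); simp
    omega
  obtain ⟨x, hxAB, hxd⟩ := hx
  obtain ⟨hxA, hxB⟩ := Finset.mem_inter.mp hxAB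
  obtain ⟨α₁, hα₁, hgα₁⟩ := Finset.mem_image.mp hxA
  obtain ⟨α₂, hα₂, hgα₂⟩ := Finset.mem_image.mp hxB
  have hx0 : x ≠ 0 := hgα₁ ▸ hg0 α₁ (hD₀D hα₁)
  have hgα₂0 : g α₂ ≠ 0 := hg0 α₂ (hD₀D hα₂)
  have hgα₂' : g α₂ = d / x := by
    rw [div_eq_iff hgα₂0] at hgα₂
    rw [eq_div_iff hx0]
    linear_combination -hgα₂
  have hne12 : α₁ ≠ α₂ := by
    intro h
    apply hxd
    have hxx := hgα₂'
    rw [← h, hgα₁] at hxx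
    rw [eq_div_iff hx0] at hxx
    exact hxx
  set T : Finset (ZMod p) := (D₀.erase α₁).erase α₂ with hT
  have hα₂' : α₂ ∈ D₀.erase α₁ := Finset.mem_erase.mpr ⟨hne12.symm, hα₂⟩
  have hTsub : T ⊆ D := fun y hy =>
    hD₀D (Finset.mem_of_mem_erase (Finset.mem_of_mem_erase hy))
  have hTcard : T.card = k := by
    rw [hT, Finset.card_erase_of_mem hα₂', Finset.card_erase_of_mem hα₁, hD₀card]
    omega
  refine ⟨T, hTsub, hTcard, ?_⟩
  have hprodT : ∏ β ∈ T, g β = c := by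
    have e1 : g α₁ * ∏ β ∈ D₀.erase α₁, g β = P :=
      Finset.mul_prod_erase D₀ g hα₁
    have e2 : g α₂ * ∏ β ∈ T, g β = ∏ β ∈ D₀.erase α₁, g β :=
      Finset.mul_prod_erase (D₀.erase α₁) g hα₂'
    have e3 : g α₁ * g α₂ = d := by
      rw [hgα₁, hgα₂', mul_comm, div_mul_cancel₀ d hx0]
    have e4 : d * ∏ β ∈ T, g β = P := by
      rw [← e3, mul_assoc, e2, e1]
    have e5 : d * c = P := by rw [hd]; exact div_mul_cancel₀ P hc0
    exact mul_left_cancel₀ hd0 (e4.trans e5.symm)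
  rw [← hprodT]
  apply Finset.prod_congr rfl
  intro β hβ
  have hβ' : β - δ' ≠ 0 := hsub2 β (hTsub hβ)
  simp only [hgdef]
  rw [eq_div_iff hβ', add_mul, div_mul_cancel₀ _ hβ']
  ring
end

section
/- Let p be an odd prime, k ≥ (p-1)/2, and D ⊆ F_p with |D| ≥ k+2, and δ ∈ F_p \ D. Then for every γ ∈ F_p with γ ≠ δ^k, there exists a k-element subset {β_1,...,β_k} ⊆ D such that ∏_{i=1}^k (δ - β_i) = δ^k - γ. -/
/-!
Pass to the set `S = {δ - α}` of nonzero values and keep only `k + 2` of them, with product `P`.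
It suffices to find distinct `s, t ∈ S` with `s * t = P / (δ ^ k - γ)` and drop them. Both `S` and
`(P / (δ ^ k - γ)) / S` are subsets of `F_pˣ` of size `k + 2 ≥ (p + 2) / 2`, so they share at least
three elements; at most two of these are square roots of `P / (δ ^ k - γ)`, and any other one
yields the required pair.
-/

open Finset Polynomial

section FiniteField

variable {F : Type*} [Field F] [Fintype F] [DecidableEq F] {S : Finset F}

theorem exists_ne_mul_eq_of_card (hS : (0 : F) ∉ S) (hcard : Fintype.card F + 2 ≤ 2 * #S)
    {d : F} (hd : d ≠ 0) : ∃ s ∈ S, ∃ t ∈ S, s ≠ t ∧ s * t = d := by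
  set B := S.image (d / ·)
  have hB : #B = #S := card_image_of_injOn fun s _ t _ hst =>
    inv_injective (mul_left_cancel₀ hd (by simpa only [div_eq_mul_inv] using hst))
  have hunion : #(S ∪ B) < Fintype.card F := by
    refine card_lt_univ_of_notMem (x := 0) fun h => ?_
    rcases mem_union.1 h with h | h
    · exact hS h
    · obtain ⟨t, ht, hdt⟩ := mem_image.1 h
      exact div_ne_zero hd (ne_of_mem_of_not_mem ht hS) hdt
  have hinter : 2 < #(S ∩ B) := by
    have := card_inter_add_card_union S B
    omega
  have hroots : #(nthRoots 2 d).toFinset ≤ 2 :=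
    (Multiset.toFinset_card_le _).trans (card_nthRoots 2 d)
  obtain ⟨s, hsSB, hs⟩ := exists_mem_notMem_of_card_lt_card (hroots.trans_lt hinter)
  obtain ⟨hsS, hsB⟩ := mem_inter.1 hsSB
  obtain ⟨t, htS, rfl⟩ := mem_image.1 hsB
  have ht : t ≠ 0 := ne_of_mem_of_not_mem htS hS
  refine ⟨d / t, hsS, t, htS, fun h => hs ?_, div_mul_cancel₀ d ht⟩
  rw [Multiset.mem_toFinset, mem_nthRoots two_pos, sq]
  nth_rw 2 [h]
  exact div_mul_cancel₀ d ht

theorem exists_subset_card_add_two_prod_eq (hS : (0 : F) ∉ S)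
    (hcard : Fintype.card F + 2 ≤ 2 * #S) {c : F} (hc : c ≠ 0) :
    ∃ T ⊆ S, #T + 2 = #S ∧ ∏ x ∈ T, x = c := by
  have hP : ∏ x ∈ S, x ≠ 0 := prod_ne_zero_iff.2 fun x hx => ne_of_mem_of_not_mem hx hS
  obtain ⟨s, hs, t, ht, hst, hmul⟩ :=
    exists_ne_mul_eq_of_card hS hcard (div_ne_zero hP hc)
  have htS' : t ∈ S.erase s := mem_erase.2 ⟨hst.symm, ht⟩
  refine ⟨(S.erase s).erase t, (erase_subset _ _).trans (erase_subset _ _), ?_, ?_⟩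
  · rw [← card_erase_add_one hs, ← card_erase_add_one htS']
  · have hsplit : s * t * ∏ x ∈ (S.erase s).erase t, x = ∏ x ∈ S, x := by
      rw [mul_assoc, mul_prod_erase _ (fun x => x) htS', mul_prod_erase _ (fun x => x) hs]
    rw [hmul, div_mul_eq_mul_div, div_eq_iff hc] at hsplit
    exact mul_left_cancel₀ hP hsplit

end FiniteField

theorem stmt12_general (p : ℕ) [Fact p.Prime] (k : ℕ)
    (hk : (p - 1) / 2 ≤ k)
    (D : Finset (ZMod p)) (hD : k + 2 ≤ D.card)
    (δ : ZMod p) (hδ : δ ∉ D)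
    (γ : ZMod p) (hγ : γ ≠ δ ^ k) :
    ∃ T ⊆ D, T.card = k ∧ (∏ β ∈ T, (δ - β)) = δ ^ k - γ := by
  have hinj : Function.Injective (δ - · : ZMod p → ZMod p) := sub_right_injective
  obtain ⟨S, hSsub, hScard⟩ :=
    exists_subset_card_eq ((card_image_of_injective D hinj).symm ▸ hD)
  have hS0 : (0 : ZMod p) ∉ S := fun h => by
    obtain ⟨β, hβ, hβδ⟩ := mem_image.1 (hSsub h)
    exact hδ (sub_eq_zero.1 hβδ ▸ hβ)
  have hcard : Fintype.card (ZMod p) + 2 ≤ 2 * #S := by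
    rw [ZMod.card, hScard]
    omega
  obtain ⟨T, hTS, hTcard, hTprod⟩ :=
    exists_subset_card_add_two_prod_eq hS0 hcard (sub_ne_zero.2 hγ.symm)
  obtain ⟨T', hT'D, rfl⟩ := subset_image_iff.1 (hTS.trans hSsub)
  rw [card_image_of_injective _ hinj] at hTcard
  rw [prod_image hinj.injOn] at hTprod
  exact ⟨T', hT'D, by omega, hTprod⟩

theorem stmt12 (p : ℕ) [Fact p.Prime] (hodd : Odd p) (k : ℕ)
    (hk : (p - 1) / 2 ≤ k)
    (D : Finset (ZMod p)) (hD : k + 2 ≤ D.card)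
    (δ : ZMod p) (hδ : δ ∉ D)
    (γ : ZMod p) (hγ : γ ≠ δ ^ k) :
    ∃ T ⊆ D, T.card = k ∧ (∏ β ∈ T, (δ - β)) = δ ^ k - γ :=
  stmt12_general p k hk D hD δ hδ γ hγ
end

section
/- Let p be an odd prime, k ≥ (p-1)/2, and D = {α_1,...,α_n} ⊆ F_p with k < n ≤ p. Then u ∈ F_p^n is a deep hole of RS_p(D,k) if and only if the Lagrange interpolating function u(x) of u is equivalent to x^k or to 1/(x-δ) for some δ ∈ F_p \ D, where two functions f and g on D are equivalent if g = a·f + h on D for some a ∈ F_p^* and polynomial h of degree < k. -/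
/-- The Reed-Solomon code with evaluation set `D` and dimension `k`. -/
noncomputable def RSCode {F : Type*} [Field F] (D : Finset F) (k : ℕ) : Set (D → F) :=
  {v | ∃ f : Polynomial F, f.degree < k ∧ ∀ α : D, v α = f.eval (α : F)}

open Polynomial Finset

lemma Function.Involutive.exists_mem_apply_mem_ne {α : Type*} [Fintype α] [DecidableEq α]
    {σ : α → α} (hσ : Function.Involutive σ) {A : Finset α}
    (hA : #{x | σ x = x} + Fintype.card α < 2 * #A) :
    ∃ x ∈ A, σ x ∈ A ∧ σ x ≠ x := by
  have hB : #(A.image σ) = #A := card_image_of_injective _ hσ.injective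
  have := card_inter_add_card_union A (A.image σ)
  have := card_le_univ (A ∪ A.image σ)
  obtain ⟨x, hx, hσx⟩ : ∃ x ∈ A ∩ A.image σ, σ x ≠ x := by
    by_contra! H
    have := card_le_card fun x hx => mem_filter.2 ⟨mem_univ x, H x hx⟩
    omega
  obtain ⟨hxA, y, hy, rfl⟩ := by simpa only [mem_inter, mem_image] using hx
  exact ⟨σ y, hxA, by rwa [hσ y], hσx⟩

lemma hammingDist_add_card_filter_eq {ι β : Type*} [DecidableEq β] (D : Finset ι)
    (v w : ι → β) :
    hammingDist (fun α : D => v α) (fun α : D => w α) + #{α ∈ D | v α = w α} = #D := by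
  rw [hammingDist, add_comm, ← card_filter_add_card_filter_not (s := D) (fun α => v α = w α)]
  congr 1
  simp only [card_filter]
  exact sum_coe_sort D fun α => if v α ≠ w α then 1 else 0

section FiniteField

variable {F : Type*} [Field F] [Fintype F] [DecidableEq F]

lemma exists_ne_add_eq (h2 : (2 : F) ≠ 0) {D : Finset F} (hD : Fintype.card F + 2 ≤ 2 * #D)
    (v : F) : ∃ β ∈ D, ∃ γ ∈ D, β ≠ γ ∧ β + γ = v := by
  have hfix : #{x : F | v - x = x} ≤ 1 := card_le_one.2 fun x hx y hy => by
    simp only [mem_filter, mem_univ, true_and] at hx hy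
    exact mul_left_cancel₀ h2 (by linear_combination hy - hx)
  have hσ : Function.Involutive (v - ·) := sub_sub_cancel v
  obtain ⟨β, hβ, hγ, hne⟩ := hσ.exists_mem_apply_mem_ne (A := D) (by omega)
  exact ⟨β, hβ, v - β, hγ, hne.symm, add_sub_cancel β v⟩

lemma exists_ne_mul_eq {c : F} (hc : c ≠ 0) {E : Finset F} (hE : Fintype.card F + 4 ≤ 2 * #E) :
    ∃ x ∈ E, ∃ y ∈ E, x ≠ y ∧ x * y = c := by
  have hfix : #{x : F | c / x = x} ≤ 3 := by
    have hsub : ({x | c / x = x} : Finset F) ⊆ insert 0 (nthRoots 2 c).toFinset := fun x hx => by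
      rw [mem_filter] at hx
      rw [mem_insert, Multiset.mem_toFinset, mem_nthRoots two_pos, or_iff_not_imp_left]
      intro hx0
      rw [div_eq_iff hx0] at hx
      rw [hx.2, sq]
    refine (card_le_card hsub).trans ((card_insert_le _ _).trans ?_)
    have := (Multiset.toFinset_card_le _).trans (card_nthRoots 2 c)
    omega
  have hσ : Function.Involutive (c / ·) := fun x => div_div_cancel₀ hc
  obtain ⟨x, hx, hy, hne⟩ := hσ.exists_mem_apply_mem_ne (A := E) (by omega)
  have hx0 : x ≠ 0 := by rintro rfl; simp at hne
  exact ⟨x, hx, c / x, hy, hne.symm, mul_div_cancel₀ c hx0⟩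

lemma cases_of_forall_pair_ne_zero (h2 : (2 : F) ≠ 0) {D : Finset F}
    (hD : Fintype.card F + 5 ≤ 2 * #D)
    {M₀ M₁ M₂ : F} (H : ∀ β ∈ D, ∀ γ ∈ D, β ≠ γ → M₂ - (β + γ) * M₁ + β * γ * M₀ ≠ 0) :
    (M₀ = 0 ∧ M₁ = 0 ∧ M₂ ≠ 0) ∨ (M₀ ≠ 0 ∧ ∃ δ ∉ D, M₁ = δ * M₀ ∧ M₂ = δ ^ 2 * M₀) := by
  have hq := Fintype.card_pos (α := F)
  by_cases hM₀ : M₀ = 0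
  · have hM₁ : M₁ = 0 := by
      by_contra hM₁
      obtain ⟨β, hβ, γ, hγ, hne, hsum⟩ := exists_ne_add_eq h2 (D := D) (by omega) (M₂ / M₁)
      exact H β hβ γ hγ hne (by rw [hsum, hM₀, div_mul_cancel₀ _ hM₁]; ring)
    obtain ⟨β, hβ, γ, hγ, hne⟩ := one_lt_card.1 (by omega : 1 < #D)
    exact .inl ⟨hM₀, hM₁, by simpa [hM₀, hM₁] using H β hβ γ hγ hne⟩
  · set δ := M₁ / M₀
    have key : ∀ β γ, M₂ - (β + γ) * M₁ + β * γ * M₀ =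
        M₀ * ((β - δ) * (γ - δ)) + (M₂ - δ ^ 2 * M₀) := fun β γ => by
      simp only [δ]; field_simp; ring
    have hM₂ : M₂ = δ ^ 2 * M₀ := by
      by_contra hne
      have hc : -(M₂ - δ ^ 2 * M₀) / M₀ ≠ 0 := div_ne_zero (neg_ne_zero.2 (sub_ne_zero.2 hne)) hM₀
      obtain ⟨x, hx, y, hy, hxy, hmul⟩ := exists_ne_mul_eq hc (E := D.image (· - δ))
        (by rw [card_image_of_injective _ (sub_left_injective)]; omega)
      obtain ⟨β, hβ, rfl⟩ := mem_image.1 hx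
      obtain ⟨γ, hγ, rfl⟩ := mem_image.1 hy
      refine H β hβ γ hγ (fun h => hxy (by rw [h])) ?_
      rw [key, hmul]
      field_simp
      ring
    refine .inr ⟨hM₀, δ, fun hδ => ?_, by simp only [δ]; field_simp, hM₂⟩
    obtain ⟨γ, hγ, hne⟩ := exists_mem_ne (by omega : 1 < #D) δ
    exact H δ hδ γ hγ hne.symm (by rw [key, hM₂]; ring)

end FiniteField

namespace ReedSolomon

variable {F : Type*} [Field F]

def RSEquiv (D : Finset F) (k : ℕ) (u g : F → F) : Prop :=
  ∃ a ≠ 0, ∃ h : F[X], h.degree < k ∧ ∀ α ∈ D, u α = a * g α + h.eval α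

section

variable {D S : Finset F} {k : ℕ} {u g : F → F}

lemma RSEquiv.mono (h : RSEquiv D k u g) (hS : S ⊆ D) : RSEquiv S k u g := by
  obtain ⟨a, ha, h, hh, hu⟩ := h
  exact ⟨a, ha, h, hh, fun α hα => hu α (hS hα)⟩

lemma RSEquiv.refl (g : F → F) : RSEquiv D k g g :=
  ⟨1, one_ne_zero, 0, by simp, by simp⟩

end

variable [DecidableEq F]

def divDiff (D : Finset F) (v : F → F) : F :=
  ∑ α ∈ D, v α / ∏ β ∈ D.erase α, (α - β)

section DivDiff

variable {D : Finset F}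

lemma divDiff_congr {v w : F → F} (h : ∀ α ∈ D, v α = w α) : divDiff D v = divDiff D w :=
  sum_congr rfl fun α hα => by rw [h α hα]

lemma divDiff_add_mul (v w : F → F) (a : F) :
    divDiff D (fun x => v x + a * w x) = divDiff D v + a * divDiff D w := by
  simp only [divDiff, mul_sum, ← sum_add_distrib]
  exact sum_congr rfl fun _ _ => by ring

lemma divDiff_eval {P : F[X]} (hP : P.degree < #D) : divDiff D P.eval = P.coeff (#D - 1) :=
  (Lagrange.coeff_eq_sum (Set.injOn_id _) hP).symm

lemma divDiff_erase {β : F} (hβ : β ∈ D) (v : F → F) (j : ℕ) :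
    divDiff (D.erase β) (fun x => v x * x ^ j) =
      divDiff D (fun x => v x * x ^ (j + 1)) - β * divDiff D (fun x => v x * x ^ j) := by
  rw [sub_eq_add_neg, neg_mul_eq_neg_mul, ← divDiff_add_mul, divDiff, divDiff,
    ← sum_erase D (a := β)]
  swap
  · ring
  refine sum_congr rfl fun α hα => ?_
  have hαβ : α - β ≠ 0 := sub_ne_zero.2 (ne_of_mem_erase hα)
  rw [erase_right_comm, ← mul_prod_erase _ _ (mem_erase.2 ⟨(ne_of_mem_erase hα).symm, hβ⟩)]
  field_simp
  ring

lemma divDiff_pow_mul_pow {k m j : ℕ} (hD : #D = k + m) (hj : j < m) :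
    divDiff D (fun x => x ^ k * x ^ j) = if j = m - 1 then 1 else 0 := by
  have hdeg : (X ^ (k + j) : F[X]).degree < #D := by
    rw [degree_X_pow]; exact_mod_cast (by omega : k + j < #D)
  simp only [← pow_add]
  rw [show (fun x : F => x ^ (k + j)) = (X ^ (k + j) : F[X]).eval by ext; simp,
    divDiff_eval hdeg, coeff_X_pow]
  congr 1
  exact propext (by omega)

lemma divDiff_inv_sub_mul_pow {δ : F} (hδ : δ ∉ D) {j : ℕ} (hj : j < #D) :
    divDiff D (fun x => (x - δ)⁻¹ * x ^ j) = δ ^ j * divDiff D (fun x => (x - δ)⁻¹) := by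
  induction j with
  | zero => simp
  | succ j ih =>
    have hX : (X ^ j : F[X]).degree < #D := by
      rw [degree_X_pow]; exact_mod_cast (by omega : j < #D)
    -- `x ^ (j + 1) / (x - δ) = x ^ j + δ * x ^ j / (x - δ)` on `D`, and `x ^ j` has no
    -- coefficient in degree `#D - 1`
    calc divDiff D (fun x => (x - δ)⁻¹ * x ^ (j + 1))
        = divDiff D (fun x => (X ^ j : F[X]).eval x + δ * ((x - δ)⁻¹ * x ^ j)) := by
          refine divDiff_congr fun α hα => ?_
          have : α - δ ≠ 0 := sub_ne_zero.2 fun h => hδ (h ▸ hα)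
          simp only [eval_pow, eval_X]
          field_simp
          ring
      _ = δ ^ (j + 1) * divDiff D (fun x => (x - δ)⁻¹) := by
          rw [divDiff_add_mul, divDiff_eval hX, coeff_X_pow, if_neg (by omega), ih (by omega)]
          ring

lemma divDiff_inv_sub_ne_zero {δ : F} (hδ : δ ∉ D) (hD : D.Nonempty) :
    divDiff D (fun x => (x - δ)⁻¹) ≠ 0 := by
  have h : divDiff D (fun x => (x - δ)⁻¹) =
      -∑ α ∈ D, Lagrange.nodalWeight D id α * (δ - id α)⁻¹ := by
    simp only [divDiff, Lagrange.nodalWeight, prod_inv_distrib, ← sum_neg_distrib, id]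
    exact sum_congr rfl fun α _ => by rw [← neg_sub δ α, inv_neg]; ring
  rw [h, neg_ne_zero]
  exact Lagrange.sum_nodalWeight_mul_inv_sub_ne_zero (Set.injOn_id _)
    (fun α hα h => hδ (h ▸ hα)) hD

lemma exists_degree_lt_iff_divDiff_eq_zero {k m : ℕ} (hD : #D = k + m) (v : F → F) :
    (∃ h : F[X], h.degree < k ∧ ∀ α ∈ D, v α = h.eval α) ↔
      ∀ j < m, divDiff D (fun x => v x * x ^ j) = 0 := by
  constructor
  · rintro ⟨h, hh, hv⟩ j hj
    have hdeg : (h * X ^ j).degree < ↑(k + j) := by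
      rw [degree_mul_X_pow, Nat.cast_add]
      exact WithBot.add_lt_add_right (WithBot.natCast_ne_bot j) hh
    rw [divDiff_congr (w := (h * X ^ j).eval) fun α hα => by simp [hv α hα],
      divDiff_eval (hdeg.trans_le (by exact_mod_cast (by omega : k + j ≤ #D)))]
    exact coeff_eq_zero_of_degree_lt (hdeg.trans_le (by exact_mod_cast (by omega : k + j ≤ #D - 1)))
  · intro hv
    set P := Lagrange.interpolate D id v
    have hPD : P.degree < #D := Lagrange.degree_interpolate_lt _ (Set.injOn_id _)
    have hPv : ∀ α ∈ D, P.eval α = v α := fun α hα =>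
      Lagrange.eval_interpolate_at_node v (Set.injOn_id _) hα
    refine ⟨P, ?_, fun α hα => (hPv α hα).symm⟩
    by_contra! hkP
    -- multiplying `P` by `X ^ j` moves its leading coefficient to the top position `#D - 1`
    have hP0 : P ≠ 0 := fun h => by rw [h, degree_zero] at hkP; exact absurd hkP (by simp)
    rw [degree_eq_natDegree hP0] at hkP hPD
    norm_cast at hkP hPD
    set j := #D - 1 - P.natDegree
    have hPX : (P * X ^ j).degree < (#D : WithBot ℕ) := by
      rw [degree_mul_X_pow, degree_eq_natDegree hP0]; exact_mod_cast (by omega)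
    have := hv j (by omega)
    rw [divDiff_congr (w := (P * X ^ j).eval) fun α hα => by rw [eval_mul, hPv α hα]; simp,
      divDiff_eval hPX, show #D - 1 = P.natDegree + j by omega, coeff_mul_X_pow] at this
    exact hP0 (leadingCoeff_eq_zero.1 this)

end DivDiff

def IsDeepHole (D : Finset F) (k : ℕ) (u : F → F) : Prop :=
  ∀ f : F[X], f.degree < k → #{α ∈ D | u α = f.eval α} ≤ k

def IsStandardDeepHole (D : Finset F) (k : ℕ) (u : F → F) : Prop :=
  RSEquiv D k u (· ^ k) ∨ ∃ δ ∉ D, RSEquiv D k u fun x => (x - δ)⁻¹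

variable {D S : Finset F} {k m : ℕ} {u g : F → F}

lemma IsDeepHole.mono (h : IsDeepHole D k u) (hS : S ⊆ D) : IsDeepHole S k u := fun f hf =>
  (card_le_card (filter_subset_filter _ hS)).trans (h f hf)

lemma isDeepHole_iff_divDiff_ne_zero :
    IsDeepHole D k u ↔ ∀ S ⊆ D, #S = k + 1 → divDiff S u ≠ 0 := by
  constructor
  · intro h S hSD hS h0
    set P := Lagrange.interpolate S id u
    have hPS : P.degree < #S := Lagrange.degree_interpolate_lt _ (Set.injOn_id _)
    have hPu : ∀ α ∈ S, u α = P.eval α := fun α hα =>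
      (Lagrange.eval_interpolate_at_node u (Set.injOn_id _) hα).symm
    have hPk : P.degree < k := by
      refine (degree_lt_iff_coeff_zero _ _).2 fun i hi => ?_
      obtain rfl | hi := hi.eq_or_lt
      · rwa [divDiff_congr hPu, divDiff_eval hPS, hS, Nat.add_sub_cancel] at h0
      · exact coeff_eq_zero_of_degree_lt (hPS.trans_le (by exact_mod_cast (by omega)))
    have hSP : S ⊆ {α ∈ D | u α = P.eval α} := fun α hα => mem_filter.2 ⟨hSD hα, hPu α hα⟩
    have := (card_le_card hSP).trans (h P hPk)
    omega
  · intro h f hf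
    by_contra! hlt
    obtain ⟨S, hS, hcard⟩ := exists_subset_card_eq (n := k + 1) hlt
    apply h S (hS.trans (filter_subset _ _)) hcard
    have hfS : f.degree < #S := hf.trans (by exact_mod_cast (by omega))
    rw [divDiff_congr fun α hα => (mem_filter.1 (hS hα)).2, divDiff_eval hfS, hcard,
      Nat.add_sub_cancel]
    exact coeff_eq_zero_of_degree_lt hf

lemma rsEquiv_iff_divDiff (hD : #D = k + m) :
    RSEquiv D k u g ↔ ∃ a ≠ 0, ∀ j < m,
      divDiff D (fun x => u x * x ^ j) = a * divDiff D (fun x => g x * x ^ j) := by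
  refine exists_congr fun a => and_congr_right fun _ => ?_
  have hlin : ∀ j, divDiff D (fun x => (u x - a * g x) * x ^ j) =
      divDiff D (fun x => u x * x ^ j) - a * divDiff D (fun x => g x * x ^ j) := fun j => by
    rw [sub_eq_add_neg, neg_mul_eq_neg_mul, ← divDiff_add_mul]
    exact congrArg _ (funext fun x => by ring)
  have := exists_degree_lt_iff_divDiff_eq_zero hD (fun x => u x - a * g x)
  simp only [hlin, sub_eq_zero] at this
  simpa only [sub_eq_iff_eq_add'] using this

lemma rsEquiv_pow_iff (hD : #D = k + m) :
    RSEquiv D k u (· ^ k) ↔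
      ∃ a ≠ 0, ∀ j < m, divDiff D (fun x => u x * x ^ j) = if j = m - 1 then a else 0 := by
  rw [rsEquiv_iff_divDiff hD]
  refine exists_congr fun a => and_congr_right fun _ => forall₂_congr fun j hj => ?_
  rw [divDiff_pow_mul_pow hD hj]
  split_ifs <;> simp

lemma rsEquiv_inv_sub_iff (hD : #D = k + m) (hm : 0 < m) {δ : F} (hδ : δ ∉ D) :
    RSEquiv D k u (fun x => (x - δ)⁻¹) ↔
      ∃ c ≠ 0, ∀ j < m, divDiff D (fun x => u x * x ^ j) = c * δ ^ j := by
  have hG := divDiff_inv_sub_ne_zero hδ (card_pos.1 (by omega))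
  rw [rsEquiv_iff_divDiff hD]
  constructor
  · rintro ⟨a, ha, H⟩
    refine ⟨a * divDiff D (fun x => (x - δ)⁻¹), mul_ne_zero ha hG, fun j hj => ?_⟩
    rw [H j hj, divDiff_inv_sub_mul_pow hδ (by omega)]
    ring
  · rintro ⟨c, hc, H⟩
    refine ⟨c / divDiff D (fun x => (x - δ)⁻¹), div_ne_zero hc hG, fun j hj => ?_⟩
    rw [H j hj, divDiff_inv_sub_mul_pow hδ (by omega), div_mul_eq_mul_div, mul_div_assoc,
      mul_div_cancel_right₀ _ hG]

lemma IsStandardDeepHole.isDeepHole (h : IsStandardDeepHole D k u) : IsDeepHole D k u := by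
  refine isDeepHole_iff_divDiff_ne_zero.2 fun S hSD hS => ?_
  have hu : divDiff S u = divDiff S (fun x => u x * x ^ 0) := by simp
  rcases h with h | ⟨δ, hδ, h⟩
  · obtain ⟨a, ha, H⟩ := (rsEquiv_pow_iff hS).1 (h.mono hSD)
    rw [hu, H 0 one_pos]
    simpa using ha
  · obtain ⟨c, hc, H⟩ := (rsEquiv_inv_sub_iff hS one_pos fun h => hδ (hSD h)).1 (h.mono hSD)
    rw [hu, H 0 one_pos]
    simpa using hc

lemma isStandardDeepHole_iff_divDiff (hD : #D = k + m) (hm : 0 < m) :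
    IsStandardDeepHole D k u ↔
      (∃ a ≠ 0, ∀ j < m, divDiff D (fun x => u x * x ^ j) = if j = m - 1 then a else 0) ∨
        ∃ δ ∉ D, ∃ c ≠ 0, ∀ j < m, divDiff D (fun x => u x * x ^ j) = c * δ ^ j := by
  rw [IsStandardDeepHole, rsEquiv_pow_iff hD]
  exact or_congr_right <|
    exists_congr fun δ => and_congr_right fun hδ => rsEquiv_inv_sub_iff hD hm hδ

lemma not_rsEquiv_pow_of_rsEquiv_inv_sub (hD : k + 2 ≤ #D) {δ : F} (hδ : δ ∉ D)
    (h : RSEquiv D k u fun x => (x - δ)⁻¹) : ¬ RSEquiv D k u (· ^ k) := fun h' => by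
  obtain ⟨a, -, Ha⟩ := (rsEquiv_pow_iff (m := #D - k) (by omega)).1 h'
  obtain ⟨c, hc, Hc⟩ := (rsEquiv_inv_sub_iff (m := #D - k) (by omega) (by omega) hδ).1 h
  have := (Hc 0 (by omega)).symm.trans (Ha 0 (by omega))
  rw [if_neg (by omega), pow_zero, mul_one] at this
  exact hc this

lemma eq_of_rsEquiv_inv_sub (hD : k + 2 ≤ #D) {δ δ' : F} (hδ : δ ∉ D) (hδ' : δ' ∉ D)
    (h : RSEquiv D k u fun x => (x - δ)⁻¹) (h' : RSEquiv D k u fun x => (x - δ')⁻¹) : δ = δ' := by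
  obtain ⟨c, hc, H⟩ := (rsEquiv_inv_sub_iff (m := #D - k) (by omega) (by omega) hδ).1 h
  obtain ⟨c', -, H'⟩ := (rsEquiv_inv_sub_iff (m := #D - k) (by omega) (by omega) hδ').1 h'
  have h0 := (H 0 (by omega)).symm.trans (H' 0 (by omega))
  have h1 := (H 1 (by omega)).symm.trans (H' 1 (by omega))
  simp only [pow_zero, mul_one, pow_one] at h0 h1
  rw [← h0] at h1
  exact mul_left_cancel₀ hc h1

lemma RSEquiv.union {A B : Finset F} (hA : RSEquiv A k u g) (hB : RSEquiv B k u g)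
    (hg : IsDeepHole (A ∩ B) k g) (hAB : k < #(A ∩ B)) : RSEquiv (A ∪ B) k u g := by
  obtain ⟨a, ha, h, hh, hu⟩ := hA
  obtain ⟨a', -, h', hh', hu'⟩ := hB
  have hsub : ∀ α ∈ A ∩ B, (a - a') * g α = (h' - h).eval α := fun α hα => by
    rw [eval_sub]
    linear_combination (hu α (mem_inter.1 hα).1).symm.trans (hu' α (mem_inter.1 hα).2)
  have haa : a = a' := by
    by_contra hne
    have hne : a - a' ≠ 0 := sub_ne_zero.2 hne
    -- otherwise `g` would agree on all of `A ∩ B` with a polynomial of degree `< k`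
    have hf : (C (a - a')⁻¹ * (h' - h)).degree < k := by
      rw [degree_C_mul (inv_ne_zero hne)]
      exact (degree_sub_le _ _).trans_lt (max_lt hh' hh)
    have := hg _ hf
    rw [filter_true_of_mem fun α hα => by
      rw [eval_mul, eval_C, ← hsub α hα, inv_mul_cancel_left₀ hne]] at this
    omega
  have hhh : h = h' := by
    refine eq_of_degree_sub_lt_of_eval_finset_eq (A ∩ B)
      ((degree_sub_le _ _).trans_lt ((max_lt hh hh').trans (by exact_mod_cast hAB))) fun α hα => ?_
    have := hsub α hα
    rw [haa, sub_self, zero_mul, eval_sub] at this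
    exact (sub_eq_zero.1 this.symm).symm
  refine ⟨a, ha, h, hh, fun α hα => ?_⟩
  rcases mem_union.1 hα with hα | hα
  · exact hu α hα
  · rw [haa, hhh]
    exact hu' α hα

lemma IsStandardDeepHole.of_erase (hD : k + 4 ≤ #D)
    (h : ∀ β ∈ D, IsStandardDeepHole (D.erase β) k u) : IsStandardDeepHole D k u := by
  obtain ⟨β, hβ, γ, hγ, hβγ⟩ := one_lt_card.1 (by omega : 1 < #D)
  have hunion : D.erase β ∪ D.erase γ = D := by
    ext α
    simp only [mem_union, mem_erase]
    grind
  have hs := card_inter_add_card_union (D.erase β) (D.erase γ)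
  rw [hunion, card_erase_of_mem hβ, card_erase_of_mem hγ] at hs
  have hs : k + 2 ≤ #(D.erase β ∩ D.erase γ) := by omega
  have hsβ : D.erase β ∩ D.erase γ ⊆ D.erase β := inter_subset_left
  have hsγ : D.erase β ∩ D.erase γ ⊆ D.erase γ := inter_subset_right
  rcases h β hβ with hA | ⟨δ, hδ, hA⟩ <;> rcases h γ hγ with hB | ⟨δ', hδ', hB⟩
  · left
    rw [← hunion]
    exact hA.union hB (IsStandardDeepHole.isDeepHole (.inl (RSEquiv.refl _))) (by omega)
  · exact absurd (hA.mono hsβ)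
      (not_rsEquiv_pow_of_rsEquiv_inv_sub hs (fun h => hδ' (hsγ h)) (hB.mono hsγ))
  · exact absurd (hB.mono hsγ)
      (not_rsEquiv_pow_of_rsEquiv_inv_sub hs (fun h => hδ (hsβ h)) (hA.mono hsβ))
  · obtain rfl := eq_of_rsEquiv_inv_sub hs (fun h => hδ (hsβ h)) (fun h => hδ' (hsγ h))
      (hA.mono hsβ) (hB.mono hsγ)
    refine Or.inr ⟨δ, fun h => ?_, ?_⟩
    · rw [← hunion, mem_union] at h
      exact h.elim hδ hδ'
    · rw [← hunion]
      exact hA.union hB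
        (IsStandardDeepHole.isDeepHole (.inr ⟨δ, fun h => hδ (hsβ h), RSEquiv.refl _⟩)) (by omega)

lemma IsDeepHole.isStandardDeepHole_of_card_eq_add_one (hD : #D = k + 1) (h : IsDeepHole D k u) :
    IsStandardDeepHole D k u := by
  refine (isStandardDeepHole_iff_divDiff hD one_pos).2
    (.inl ⟨_, isDeepHole_iff_divDiff_ne_zero.1 h D subset_rfl hD, fun j hj => ?_⟩)
  obtain rfl : j = 0 := by omega
  simp

lemma IsDeepHole.isStandardDeepHole_of_card_eq_add_two (hD : #D = k + 2) (h : IsDeepHole D k u) :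
    IsStandardDeepHole D k u := by
  obtain ⟨M, hM⟩ : ∃ M : ℕ → F, ∀ j, divDiff D (fun x => u x * x ^ j) = M j := ⟨_, fun _ => rfl⟩
  have H : ∀ β ∈ D, M 1 - β * M 0 ≠ 0 := fun β hβ => by
    rw [← hM, ← hM, ← divDiff_erase hβ]
    simpa using isDeepHole_iff_divDiff_ne_zero.1 h _ (erase_subset β D)
      (by rw [card_erase_of_mem hβ]; omega)
  rw [isStandardDeepHole_iff_divDiff hD two_pos]
  simp only [hM]
  by_cases h0 : M 0 = 0
  · obtain ⟨β, hβ⟩ := card_pos.1 (by omega : 0 < #D)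
    refine .inl ⟨M 1, by simpa [h0] using H β hβ, fun j hj => ?_⟩
    interval_cases j <;> simp [h0]
  · refine .inr ⟨M 1 / M 0, fun hδ => H _ hδ (by field_simp; ring), M 0, h0, fun j hj => ?_⟩
    interval_cases j <;> field_simp

section FiniteField

variable [Fintype F]

lemma IsDeepHole.isStandardDeepHole_of_card_eq_add_three (h2 : (2 : F) ≠ 0)
    (hq : Fintype.card F ≤ 2 * k + 1) (hD : #D = k + 3) (h : IsDeepHole D k u) :
    IsStandardDeepHole D k u := by
  obtain ⟨M, hM⟩ : ∃ M : ℕ → F, ∀ j, divDiff D (fun x => u x * x ^ j) = M j := ⟨_, fun _ => rfl⟩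
  have H : ∀ β ∈ D, ∀ γ ∈ D, β ≠ γ → M 2 - (β + γ) * M 1 + β * γ * M 0 ≠ 0 :=
    fun β hβ γ hγ hne => by
      have hγβ : γ ∈ D.erase β := mem_erase.2 ⟨hne.symm, hγ⟩
      have hexp : divDiff ((D.erase β).erase γ) u = M 2 - (β + γ) * M 1 + β * γ * M 0 := by
        rw [show u = fun x => u x * x ^ 0 by simp, divDiff_erase hγβ, divDiff_erase hβ,
          divDiff_erase hβ, hM, hM, hM]
        simp only [zero_add, Nat.reduceAdd]
        ring
      rw [← hexp]
      exact isDeepHole_iff_divDiff_ne_zero.1 h _ ((erase_subset γ _).trans (erase_subset β D))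
        (by rw [card_erase_of_mem hγβ, card_erase_of_mem hβ]; omega)
  rw [isStandardDeepHole_iff_divDiff hD three_pos]
  simp only [hM]
  rcases cases_of_forall_pair_ne_zero h2 (by omega) H with ⟨h0, h1, h2'⟩ | ⟨h0, δ, hδ, h1, h2'⟩
  · exact .inl ⟨M 2, h2', fun j hj => by interval_cases j <;> simp [h0, h1]⟩
  · exact .inr ⟨δ, hδ, M 0, h0, fun j hj => by interval_cases j <;> simp [h1, h2'] <;> ring⟩

theorem IsDeepHole.isStandardDeepHole (h2 : (2 : F) ≠ 0) (hq : Fintype.card F ≤ 2 * k + 1)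
    (hkD : k < #D) (h : IsDeepHole D k u) : IsStandardDeepHole D k u := by
  obtain ⟨n, hn⟩ : ∃ n, #D = n := ⟨_, rfl⟩
  induction n generalizing D with
  | zero => omega
  | succ n ih =>
    obtain rfl | rfl | rfl | hn' : n = k ∨ n = k + 1 ∨ n = k + 2 ∨ k + 3 ≤ n := by omega
    · exact h.isStandardDeepHole_of_card_eq_add_one hn
    · exact h.isStandardDeepHole_of_card_eq_add_two hn
    · exact h.isStandardDeepHole_of_card_eq_add_three h2 hq hn
    · refine .of_erase (by omega) fun β hβ => ?_
      have := card_erase_of_mem hβ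
      exact ih (by omega) (h.mono (erase_subset β D)) (by omega)

theorem isDeepHole_iff_isStandardDeepHole (h2 : (2 : F) ≠ 0) (hq : Fintype.card F ≤ 2 * k + 1)
    (hkD : k < #D) : IsDeepHole D k u ↔ IsStandardDeepHole D k u :=
  ⟨IsDeepHole.isStandardDeepHole h2 hq hkD, IsStandardDeepHole.isDeepHole⟩

end FiniteField

lemma errDist_eq_iff (hk : k ≤ #D) (v : F → F) :
    errDist (fun α : D => v α) (RSCode D k) = #D - k ↔ IsDeepHole D k v := by
  have hdist : ∀ f : F[X], hammingDist (fun α : D => v α) (fun α : D => f.eval α) =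
      #D - #{α ∈ D | v α = f.eval α} := fun f => by
    have := hammingDist_add_card_filter_eq D v f.eval
    omega
  have hlower : IsDeepHole D k v ↔
      ∀ c ∈ RSCode D k, #D - k ≤ hammingDist (fun α : D => v α) c := by
    constructor
    · rintro h c ⟨f, hf, hc⟩
      rw [show c = fun α : D => f.eval (α : F) from funext hc, hdist]
      have := h f hf
      have := card_filter_le D (fun α => v α = f.eval α)
      omega
    · intro h f hf
      have := h _ ⟨f, hf, fun _ => rfl⟩
      rw [hdist] at this
      have := card_filter_le D (fun α => v α = f.eval α)
      omega
  -- the interpolant of `v` on `k` points of `D` is a codeword at distance at most `#D - k`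
  obtain ⟨T, hTD, hT⟩ := exists_subset_card_eq hk
  set f₀ := Lagrange.interpolate T id v
  have hf₀ : f₀.degree < k := hT ▸ Lagrange.degree_interpolate_lt _ (Set.injOn_id _)
  have hnear : hammingDist (fun α : D => v α) (fun α : D => f₀.eval α) ≤ #D - k := by
    have hT' : T ⊆ {α ∈ D | v α = f₀.eval α} := fun α hα =>
      mem_filter.2 ⟨hTD hα, (Lagrange.eval_interpolate_at_node v (Set.injOn_id _) hα).symm⟩
    have := card_le_card hT'
    rw [hdist]
    omega
  have hmem : hammingDist (fun α : D => v α) (fun α : D => f₀.eval α) ∈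
      (fun c => hammingDist (fun α : D => v α) c) '' RSCode D k := ⟨_, ⟨f₀, hf₀, fun _ => rfl⟩, rfl⟩
  rw [hlower, errDist]
  constructor
  · rintro h c hc
    rw [← h]
    exact Nat.sInf_le ⟨c, hc, rfl⟩
  · intro h
    exact le_antisymm ((Nat.sInf_le hmem).trans hnear)
      (le_csInf ⟨_, hmem⟩ (by rintro _ ⟨c, hc, rfl⟩; exact h c hc))

end ReedSolomon

open ReedSolomon

/-- Main theorem: for `p` prime, `k ≥ (p-1)/2`, `k < |D| ≤ p`, the deep holes of
`RS_p(D,k)` are exactly the words generated by functions equivalent to `x^k` or to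
`1/(x-δ)` with `δ ∉ D`. -/
theorem stmt13 (p : ℕ) [Fact p.Prime] (hp : 2 < p) (k : ℕ)
    (hk : (p - 1) / 2 ≤ k)
    (D : Finset (ZMod p)) (hkD : k < D.card) (u : D → ZMod p) :
    errDist u (RSCode D k) = D.card - k ↔
      ((∃ a : ZMod p, a ≠ 0 ∧ ∃ h : Polynomial (ZMod p), h.degree < k ∧
          ∀ α : D, u α = a * (α : ZMod p) ^ k + h.eval (α : ZMod p)) ∨
        (∃ δ : ZMod p, δ ∉ D ∧ ∃ a : ZMod p, a ≠ 0 ∧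
          ∃ h : Polynomial (ZMod p), h.degree < k ∧
            ∀ α : D, u α = a * ((α : ZMod p) - δ)⁻¹ + h.eval (α : ZMod p))) := by
  set v : ZMod p → ZMod p := Function.extend Subtype.val u 0
  have hv : ∀ α : D, v α = u α := Subtype.val_injective.extend_apply u 0
  have h2 : (2 : ZMod p) ≠ 0 := by
    have : ((2 : ℕ) : ZMod p) ≠ 0 := by
      rw [Ne, ZMod.natCast_eq_zero_iff]
      exact fun h => absurd (Nat.le_of_dvd two_pos h) (by omega)
    exact_mod_cast this
  have hq : Fintype.card (ZMod p) ≤ 2 * k + 1 := by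
    obtain ⟨r, hr⟩ := (Fact.out : p.Prime).odd_of_ne_two (by omega)
    rw [ZMod.card]
    omega
  have hequiv : ∀ g : ZMod p → ZMod p, RSEquiv D k v g ↔ ∃ a : ZMod p, a ≠ 0 ∧
      ∃ h : Polynomial (ZMod p), h.degree < k ∧ ∀ α : D, u α = a * g α + h.eval (α : ZMod p) :=
    fun g => by simp only [RSEquiv, ← hv, Subtype.forall]
  have hu : errDist u (RSCode D k) = errDist (fun α : D => v α) (RSCode D k) :=
    congrArg (errDist · _) (funext fun α => (hv α).symm)
  rw [hu, errDist_eq_iff hkD.le, isDeepHole_iff_isStandardDeepHole h2 hq hkD, IsStandardDeepHole]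
  simp only [hequiv]
end

section
/- Let α_1,...,α_{k+2} be distinct elements of F_q and δ_1, δ_2 two distinct elements of F_q not among the α_i. Then the (k+2)×(k+2) matrix G whose first k rows are (α_1^j,...,α_{k+2}^j) for j = 0,...,k-1 and whose last two rows are (1/(α_i - δ_1))_i and (1/(α_i - δ_2))_i is nonsingular. -/
/-!
A vector `v` in the left kernel gives a polynomial `p` of degree `< k` (from the first `k`
entries) and scalars `c₁, c₂` with `p(αⱼ) + c₁/(αⱼ - δ₁) + c₂/(αⱼ - δ₂) = 0` for all `j`.
Clearing denominators yields a polynomial of degree `< k + 2` with `k + 2` roots, hence zero;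
evaluating it at `δ₁` and `δ₂` kills `c₁` and `c₂`, and then `p = 0`.
-/

open Polynomial

namespace Polynomial

theorem eq_zero_of_eval_add_div_sub_eq_zero {F ι : Type*} [Field F] [Fintype ι] {α : ι → F}
    (hα : Function.Injective α) {k : ℕ} (hcard : Fintype.card ι = k + 2)
    {δ₁ δ₂ : F} (hδ : δ₁ ≠ δ₂) (h1 : ∀ i, α i ≠ δ₁) (h2 : ∀ i, α i ≠ δ₂)
    {p : F[X]} (hp : p.degree < k) {c₁ c₂ : F}
    (h : ∀ i, p.eval (α i) + c₁ / (α i - δ₁) + c₂ / (α i - δ₂) = 0) :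
    p = 0 ∧ c₁ = 0 ∧ c₂ = 0 := by
  set q := p * ((X - C δ₁) * (X - C δ₂)) + C c₁ * (X - C δ₂) + C c₂ * (X - C δ₁)
  have hq_eval : ∀ i, q.eval (α i) = 0 := by
    intro i
    have hi := h i
    have := sub_ne_zero.mpr (h1 i)
    have := sub_ne_zero.mpr (h2 i)
    field_simp at hi
    simp only [q, eval_add, eval_mul, eval_sub, eval_X, eval_C]
    linear_combination hi
  have hq_degree : q.degree < Fintype.card ι := by
    rw [hcard]
    have hquad : ((X - C δ₁) * (X - C δ₂) : F[X]).degree = 2 := by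
      rw [degree_mul, degree_X_sub_C, degree_X_sub_C]; rfl
    have hmain : (p * ((X - C δ₁) * (X - C δ₂))).degree < ↑(k + 2) := by
      rw [degree_mul, hquad, Nat.cast_add]
      exact WithBot.add_lt_add_right (by simp) hp
    have hlin (c δ : F) : (C c * (X - C δ)).degree < ↑(k + 2) := by
      grw [degree_mul_le, degree_C_le, degree_X_sub_C_le]
      norm_cast
      omega
    exact (degree_add_le _ _).trans_lt
      (max_lt ((degree_add_le _ _).trans_lt (max_lt hmain (hlin _ _))) (hlin _ _))
  have hq : q = 0 := by
    simpa using eq_zero_of_degree_lt_of_eval_index_eq_zero Finset.univ hα.injOn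
      (by simpa using hq_degree) (fun i _ => hq_eval i)
  have hc₁ : c₁ = 0 := by
    simpa [q, sub_ne_zero.mpr hδ] using congrArg (eval δ₁) hq
  have hc₂ : c₂ = 0 := by
    simpa [q, sub_ne_zero.mpr hδ.symm] using congrArg (eval δ₂) hq
  refine ⟨?_, hc₁, hc₂⟩
  simpa [q, hc₁, hc₂, X_sub_C_ne_zero] using hq

theorem sum_fin_C_mul_X_pow_eq_zero_iff {R : Type*} [Semiring R] {n : ℕ} {f : Fin n → R} :
    ∑ i : Fin n, C (f i) * X ^ (i : ℕ) = 0 ↔ f = 0 := by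
  refine ⟨fun h => ?_, fun h => by simp [h]⟩
  ext i
  simpa [finsetSum_coeff, coeff_C_mul, coeff_X_pow, Fin.val_inj] using congrArg (coeff · i) h

end Polynomial

/-- The Cauchy–Vandermonde matrix with `k` power rows and two rows of the form
`1/(α_i - δ)` is nonsingular. -/
theorem stmt18 {F : Type*} [Field F] (k : ℕ) (α : Fin (k + 2) → F)
    (hα : Function.Injective α) (δ₁ δ₂ : F) (hδ : δ₁ ≠ δ₂)
    (h1 : ∀ i, α i ≠ δ₁) (h2 : ∀ i, α i ≠ δ₂) :
    (Matrix.of fun i j : Fin (k + 2) =>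
        if (i : ℕ) < k then α j ^ (i : ℕ)
        else if (i : ℕ) = k then (α j - δ₁)⁻¹
        else (α j - δ₂)⁻¹).det ≠ 0 := by
  rw [Ne, ← Matrix.exists_vecMul_eq_zero_iff]
  rintro ⟨v, hv0, hv⟩
  set w : Fin k → F := fun i => v i.castSucc.castSucc
  have hrow : ∀ j, (∑ i : Fin k, C (w i) * X ^ (i : ℕ)).eval (α j)
      + v (Fin.last k).castSucc / (α j - δ₁) + v (Fin.last (k + 1)) / (α j - δ₂) = 0 := by
    intro j
    simpa [Matrix.vecMul, dotProduct, Fin.sum_univ_castSucc, eval_finsetSum, div_eq_mul_inv, w]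
      using congrFun hv j
  obtain ⟨hw, hc₁, hc₂⟩ := eq_zero_of_eval_add_div_sub_eq_zero hα (Fintype.card_fin _) hδ h1 h2
    (degree_sum_fin_lt w) hrow
  rw [sum_fin_C_mul_X_pow_eq_zero_iff] at hw
  refine hv0 (funext fun i => ?_)
  induction i using Fin.lastCases with
  | last => exact hc₂
  | cast i =>
    induction i using Fin.lastCases with
    | last => exact hc₁
    | cast i => exact congrFun hw i
end
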